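/- arXiv:1903.00240 — 2 statements merged into one kernel-verified Lean document; each statement's English description precedes it below -/
import Mathlib

section
/- Let M be a κ[Γ]-module with an exhaustive increasing equivariant filtration (I_t)_{t∈ℝ} as above, with Γ ⊆ ℝ a nontrivial subgroup. If x ∈ M satisfies P·x = 0 for some P = a_0 g_0 + a_1 g_1 + ⋯ + a_k g_k with g_0 < g_1 < ⋯ < g_k in Γ, all a_i ∈ κ nonzero, k ≥ 1, and x ∈ I_t, then x ∈ I_{t - n(g_k - g_{k-1})} for every natural number n. -/
/-- If `x ∈ I_t` is annihilated by `P = a_0 g_0 + ⋯ + a_k g_k ∈ κ[Γ]` with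
`g_0 < g_1 < ⋯ < g_k` in `Γ` (at least two terms, all coefficients nonzero), then
`x ∈ I_{t - n (g_k - g_{k-1})}` for every `n : ℕ`.  Here the terms are indexed by
`Fin (k+2)`, so `g_k` is `g (Fin.last (k+1))` and `g_{k-1}` is `g (Fin.castSucc (Fin.last k))`. -/
theorem stmt1 {κ : Type*} [Field κ] (Γ : AddSubgroup ℝ) (hΓ : Γ ≠ ⊥)
    (M : Type*) [AddCommGroup M] [Module κ M]
    [Module (AddMonoidAlgebra κ Γ) M] [IsScalarTower κ (AddMonoidAlgebra κ Γ) M]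
    (I : ℝ → Submodule κ M)
    (hmono : Monotone I)
    (hexh : (⨆ t : ℝ, I t) = ⊤)
    (hequiv : ∀ (g : Γ) (t : ℝ),
      (fun x : M => (AddMonoidAlgebra.single g (1 : κ) : AddMonoidAlgebra κ Γ) • x) ''
          (I t : Set M) = (I (t + (g : ℝ)) : Set M))
    (k : ℕ) (g : Fin (k + 2) → Γ) (a : Fin (k + 2) → κ)
    (hg : StrictMono fun i => ((g i : ℝ)))
    (ha : ∀ i, a i ≠ 0)
    (x : M) (t : ℝ) (hx : x ∈ I t)
    (hP : (∑ i, (AddMonoidAlgebra.single (g i) (a i) : AddMonoidAlgebra κ Γ)) • x = 0) :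
    ∀ n : ℕ,
      x ∈ I (t - n * ((g (Fin.last (k + 1)) : ℝ) - (g ((Fin.last k).castSucc) : ℝ))) := by
  classical
  set L : Fin (k + 2) := Fin.last (k + 1) with hL
  set J : Fin (k + 2) := (Fin.last k).castSucc with hJ
  have hd : ∀ s : ℝ, x ∈ I s → x ∈ I (s - ((g L : ℝ) - (g J : ℝ))) := by
    intro s hs
    -- each single term moves x into I (s + g i)
    have hmem : ∀ i : Fin (k + 2),
        (AddMonoidAlgebra.single (g i) (a i) : AddMonoidAlgebra κ Γ) • x ∈ I (s + (g i : ℝ)) := by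
      intro i
      have h1 : (AddMonoidAlgebra.single (g i) (1 : κ) : AddMonoidAlgebra κ Γ) • x
          ∈ I (s + (g i : ℝ)) := by
        have heq := hequiv (g i) s
        have hx' : (AddMonoidAlgebra.single (g i) (1 : κ) : AddMonoidAlgebra κ Γ) • x ∈
            ((fun y : M => (AddMonoidAlgebra.single (g i) (1 : κ) : AddMonoidAlgebra κ Γ) • y) ''
              (I s : Set M)) := ⟨x, hs, rfl⟩
        rw [heq] at hx'
        exact hx'
      have h2 : (AddMonoidAlgebra.single (g i) (a i) : AddMonoidAlgebra κ Γ) • x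
          = a i • ((AddMonoidAlgebra.single (g i) (1 : κ) : AddMonoidAlgebra κ Γ) • x) := by
        rw [← smul_assoc, AddMonoidAlgebra.smul_single', mul_one]
      rw [h2]
      exact Submodule.smul_mem _ _ h1
    have hle : ∀ i : Fin (k + 2), i ≠ L → (g i : ℝ) ≤ (g J : ℝ) := by
      intro i hi
      apply hg.monotone
      have hiv : (i : ℕ) ≠ k + 1 := fun h => hi (Fin.ext h)
      have hik : (i : ℕ) ≤ k := by have := i.isLt; omega
      exact hik
    -- the top term lies in I (s + g J)
    have htop : (AddMonoidAlgebra.single (g L) (a L) : AddMonoidAlgebra κ Γ) • x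
        ∈ I (s + (g J : ℝ)) := by
      have h := hP
      rw [Finset.sum_smul, ← Finset.add_sum_erase _ _ (Finset.mem_univ L)] at h
      have hsum : (AddMonoidAlgebra.single (g L) (a L) : AddMonoidAlgebra κ Γ) • x
          = -∑ i ∈ Finset.univ.erase L,
              (AddMonoidAlgebra.single (g i) (a i) : AddMonoidAlgebra κ Γ) • x :=
        eq_neg_of_add_eq_zero_left h
      rw [hsum]
      refine neg_mem (Submodule.sum_mem _ fun i hi => ?_)
      have hi' : i ≠ L := (Finset.mem_erase.mp hi).1
      exact hmono (by linarith [hle i hi']) (hmem i)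
    -- hence single (g L) 1 • x ∈ I (s + g J)
    have hy : (AddMonoidAlgebra.single (g L) (1 : κ) : AddMonoidAlgebra κ Γ) • x
        ∈ I (s + (g J : ℝ)) := by
      have h2 : (AddMonoidAlgebra.single (g L) (1 : κ) : AddMonoidAlgebra κ Γ) • x
          = (a L)⁻¹ • ((AddMonoidAlgebra.single (g L) (a L) : AddMonoidAlgebra κ Γ) • x) := by
        rw [← smul_assoc, AddMonoidAlgebra.smul_single', inv_mul_cancel₀ (ha L)]
      rw [h2]
      exact Submodule.smul_mem _ _ htop
    -- translate back by -g L
    have hkey : x ∈ I (s + (g J : ℝ) + ((-(g L) : Γ) : ℝ)) := by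
      have heq := hequiv (-(g L)) (s + (g J : ℝ))
      have hx' : x ∈
          ((fun y : M => (AddMonoidAlgebra.single (-(g L)) (1 : κ) : AddMonoidAlgebra κ Γ) • y) ''
            (I (s + (g J : ℝ)) : Set M)) := by
        refine ⟨(AddMonoidAlgebra.single (g L) (1 : κ) : AddMonoidAlgebra κ Γ) • x, hy, ?_⟩
        show (AddMonoidAlgebra.single (-(g L)) (1 : κ) : AddMonoidAlgebra κ Γ) •
          ((AddMonoidAlgebra.single (g L) (1 : κ) : AddMonoidAlgebra κ Γ) • x) = x
        rw [smul_smul, AddMonoidAlgebra.single_mul_single, neg_add_cancel, one_mul,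
          ← AddMonoidAlgebra.one_def, one_smul]
      rw [heq] at hx'
      exact hx'
    have hcoe : ((-(g L) : Γ) : ℝ) = -((g L : Γ) : ℝ) := rfl
    rw [hcoe] at hkey
    exact hmono (by linarith) hkey
  intro n
  induction n with
  | zero => simpa using hx
  | succ n ih =>
    have := hd _ ih
    refine hmono (le_of_eq ?_) this
    push_cast
    ring
end

section
/- Consider a commutative square of κ-vector spaces with maps i_1 : E_1 → F_1, i_2 : E_2 → F_2, j_E : E_1 → E_2, j_F : F_1 → F_2 (so i_2 ∘ j_E = j_F ∘ i_1), satisfying: (1) j_E and j_F are injective; (2) j_E restricts to an isomorphism ker i_1 → ker i_2; (3) image(i_2 ∘ j_E) = image(i_2) ∩ image(j_F). Consider a second such square stacked on the right (a 2×3 diagram as in observation O1 of the paper) with all three constituent squares satisfying (1)-(3). Then the induced sequence 0 → B_2/(i^A_2(A_2) + j_B(B_1)) → C_2/(i_2(A_2) + j_C(C_1)) → C_2/(i^B_2(B_2) + j_C(C_1)) → 0 is exact, where the first map is induced by i^B_2 : B_2 → C_2 and the second by the inclusion of denominators. -/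
/-- Observation O1 of the paper: given a commutative 2×3 diagram of vector spaces
`A₁ → B₁ → C₁` over `A₂ → B₂ → C₂` (vertical maps `jA, jB, jC` going up), in which the
three constituent squares `(A,B)`, `(B,C)` and the outer square `(A,C)` satisfy
(1) the vertical maps are injective, (2) the vertical maps restrict to isomorphisms of
the kernels of the horizontal maps, and (3) `range (i₂ ∘ j) = range i₂ ⊓ range j'`,
the induced sequence
`0 → B₂/(iA₂(A₂) + jB(B₁)) → C₂/(i₂(A₂) + jC(C₁)) → C₂/(iB₂(B₂) + jC(C₁)) → 0`
is exact, where the first map is induced by `iB₂` and the second by the inclusion of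
denominators. -/
theorem stmt8 {κ A₁ A₂ B₁ B₂ C₁ C₂ : Type*} [Field κ]
    [AddCommGroup A₁] [Module κ A₁] [AddCommGroup A₂] [Module κ A₂]
    [AddCommGroup B₁] [Module κ B₁] [AddCommGroup B₂] [Module κ B₂]
    [AddCommGroup C₁] [Module κ C₁] [AddCommGroup C₂] [Module κ C₂]
    (iA1 : A₁ →ₗ[κ] B₁) (iA2 : A₂ →ₗ[κ] B₂)
    (iB1 : B₁ →ₗ[κ] C₁) (iB2 : B₂ →ₗ[κ] C₂)
    (jA : A₁ →ₗ[κ] A₂) (jB : B₁ →ₗ[κ] B₂) (jC : C₁ →ₗ[κ] C₂)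
    (hAB : ∀ x, iA2 (jA x) = jB (iA1 x))
    (hBC : ∀ x, iB2 (jB x) = jC (iB1 x))
    (hjA : Function.Injective jA) (hjB : Function.Injective jB)
    (hjC : Function.Injective jC)
    (hker1 : ∀ y : A₂, iA2 y = 0 → ∃ x : A₁, iA1 x = 0 ∧ jA x = y)
    (hker2 : ∀ y : B₂, iB2 y = 0 → ∃ x : B₁, iB1 x = 0 ∧ jB x = y)
    (hker3 : ∀ y : A₂, iB2 (iA2 y) = 0 → ∃ x : A₁, iB1 (iA1 x) = 0 ∧ jA x = y)
    (him1 : LinearMap.range (iA2.comp jA) = LinearMap.range iA2 ⊓ LinearMap.range jB)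
    (him2 : LinearMap.range (iB2.comp jB) = LinearMap.range iB2 ⊓ LinearMap.range jC)
    (him3 : LinearMap.range ((iB2.comp iA2).comp jA) =
      LinearMap.range (iB2.comp iA2) ⊓ LinearMap.range jC) :
    let f : (B₂ ⧸ (LinearMap.range iA2 ⊔ LinearMap.range jB)) →ₗ[κ]
            (C₂ ⧸ (LinearMap.range (iB2.comp iA2) ⊔ LinearMap.range jC)) :=
      Submodule.mapQ _ _ iB2 (by
        refine sup_le ?_ ?_
        · intro x hx
          obtain ⟨y, rfl⟩ := hx
          exact Submodule.mem_comap.mpr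
            (Submodule.mem_sup_left (LinearMap.mem_range.mpr ⟨y, rfl⟩))
        · intro x hx
          obtain ⟨z, rfl⟩ := hx
          refine Submodule.mem_comap.mpr ?_
          rw [hBC z]
          exact Submodule.mem_sup_right (LinearMap.mem_range.mpr ⟨iB1 z, rfl⟩))
    let g : (C₂ ⧸ (LinearMap.range (iB2.comp iA2) ⊔ LinearMap.range jC)) →ₗ[κ]
            (C₂ ⧸ (LinearMap.range iB2 ⊔ LinearMap.range jC)) :=
      Submodule.mapQ _ _ LinearMap.id (by
        rw [Submodule.comap_id]
        exact sup_le_sup (LinearMap.range_comp_le_range iA2 iB2) le_rfl)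
    Function.Injective f ∧ Function.Exact f g ∧ Function.Surjective g := by
  intro f g
  have hfmk : ∀ b : B₂, f (Submodule.Quotient.mk b) = Submodule.Quotient.mk (iB2 b) := by
    intro b; simp [f, Submodule.mapQ_apply]
  have hgmk : ∀ c : C₂, g (Submodule.Quotient.mk c) = Submodule.Quotient.mk c := by
    intro c; simp [g, Submodule.mapQ_apply]
  refine ⟨?_, ?_, ?_⟩
  · rw [injective_iff_map_eq_zero]
    intro x hx
    obtain ⟨b, rfl⟩ := Submodule.Quotient.mk_surjective _ x
    rw [hfmk, Submodule.Quotient.mk_eq_zero] at hx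
    obtain ⟨y, hy, z, hz, hyz⟩ := Submodule.mem_sup.mp hx
    obtain ⟨a, rfl⟩ := hy
    obtain ⟨c, rfl⟩ := hz
    have hmem : jC c ∈ LinearMap.range (iB2.comp jB) := by
      rw [him2]
      refine ⟨⟨b - iA2 a, ?_⟩, ⟨c, rfl⟩⟩
      simp only [LinearMap.comp_apply] at hyz ⊢
      rw [map_sub, sub_eq_iff_eq_add, add_comm]
      exact hyz.symm
    obtain ⟨b1, hb1⟩ := hmem
    have hz : iB2 (b - iA2 a - jB b1) = 0 := by
      simp only [LinearMap.comp_apply] at hyz hb1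
      rw [map_sub, map_sub, hb1, sub_sub, sub_eq_zero]
      exact hyz.symm
    obtain ⟨b2, _, hb2⟩ := hker2 _ hz
    rw [Submodule.Quotient.mk_eq_zero]
    refine Submodule.mem_sup.mpr ⟨iA2 a, ⟨a, rfl⟩, jB (b1 + b2), ⟨b1 + b2, rfl⟩, ?_⟩
    rw [map_add, hb2]; abel
  · intro y
    obtain ⟨c, rfl⟩ := Submodule.Quotient.mk_surjective _ y
    rw [hgmk, Submodule.Quotient.mk_eq_zero]
    constructor
    · intro hc
      obtain ⟨u, hu, v, hv, huv⟩ := Submodule.mem_sup.mp hc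
      obtain ⟨b, rfl⟩ := hu
      obtain ⟨c1, rfl⟩ := hv
      refine ⟨Submodule.Quotient.mk b, ?_⟩
      rw [hfmk]
      have h0 : (Submodule.Quotient.mk (jC c1) :
          C₂ ⧸ (LinearMap.range (iB2.comp iA2) ⊔ LinearMap.range jC)) = 0 := by
        rw [Submodule.Quotient.mk_eq_zero]
        exact Submodule.mem_sup_right ⟨c1, rfl⟩
      rw [← huv, Submodule.Quotient.mk_add, h0, add_zero]
    · rintro ⟨x, hx⟩
      obtain ⟨b, rfl⟩ := Submodule.Quotient.mk_surjective _ x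
      rw [hfmk, Submodule.Quotient.eq] at hx
      obtain ⟨u, hu, v, hv, huv⟩ := Submodule.mem_sup.mp hx
      obtain ⟨a, rfl⟩ := hu
      obtain ⟨c1, rfl⟩ := hv
      simp only [LinearMap.comp_apply] at huv
      refine Submodule.mem_sup.mpr ⟨iB2 (b - iA2 a), ⟨b - iA2 a, rfl⟩, jC (-c1), ⟨-c1, rfl⟩, ?_⟩
      rw [map_sub, map_neg, ← sub_eq_add_neg, sub_sub, huv]
      abel
  · intro y
    obtain ⟨c, rfl⟩ := Submodule.Quotient.mk_surjective _ y
    exact ⟨Submodule.Quotient.mk c, hgmk c⟩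
end
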